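/- arXiv:1410.1712 — 8 statements merged into one kernel-verified Lean document; each statement's English description precedes it below -/
import Mathlib

section
/- For a prime p > 5 and 1 ≤ a ≤ 4, with C_a = C(2p-a+4, 4) - 5·C(p-a+4, 4), one has the integer congruences 4·C_2 ≡ p, 4·C_3 ≡ -p, and 4·C_4 ≡ 3p, all modulo p². -/
/-! Since `24 * C(m + 4, 4) = (m + 4)(m + 3)(m + 2)(m + 1)`, each `6 * (4 * C_a - r * p)` is an
explicit integer polynomial in `p` divisible by `p²`, and `6` is invertible modulo `p²`. -/

lemma cast_choose_four_mul (n : ℕ) :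
    ((n + 4).choose 4 : ℤ) * 24 = ((n : ℤ) + 4) * (n + 3) * (n + 2) * (n + 1) := by
  have h := Nat.descFactorial_eq_factorial_mul_choose (n + 4) 4
  simp only [Nat.descFactorial, Nat.reduceSubDiff, Nat.add_one_sub_one, tsub_zero, mul_one,
    Nat.factorial, Nat.succ_eq_add_one, Nat.reduceAdd, zero_add, Nat.reduceMul] at h
  rw [mul_comm, ← Nat.cast_ofNat, ← Nat.cast_mul, ← h]
  push_cast
  ring

lemma cast_choose_sub_add_four_mul {n a : ℕ} (h : a ≤ n) :
    ((n - a + 4).choose 4 : ℤ) * 24 =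
      ((n : ℤ) - a + 4) * (n - a + 3) * (n - a + 2) * (n - a + 1) := by
  rw [cast_choose_four_mul, Nat.cast_sub h]

lemma Int.modEq_of_dvd_sub_mul_six {p : ℕ} (hp : p.Prime) (hp3 : 3 < p) {x y : ℤ}
    (h : (p : ℤ) ^ 2 ∣ (x - y) * 6) : x ≡ y [ZMOD (p : ℤ) ^ 2] := by
  have hp6 : ¬ p ∣ 2 * 3 := fun h6 => by
    rcases hp.dvd_mul.1 h6 with h6 | h6 <;> have := Nat.le_of_dvd (by norm_num) h6 <;> omega
  have hcop : IsCoprime ((p : ℤ) ^ 2) 6 :=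
    (Nat.isCoprime_iff_coprime.mpr (hp.coprime_iff_not_dvd.mpr hp6)).pow_left
  exact (Int.modEq_iff_dvd.mpr (hcop.dvd_of_dvd_mul_right h)).symm

theorem stmt2 (p : ℕ) (hp : p.Prime) (hp5 : 5 < p) :
    (4 * ((Nat.choose (2 * p - 2 + 4) 4 : ℤ) - 5 * Nat.choose (p - 2 + 4) 4) ≡ (p : ℤ) [ZMOD (p : ℤ) ^ 2]) ∧
    (4 * ((Nat.choose (2 * p - 3 + 4) 4 : ℤ) - 5 * Nat.choose (p - 3 + 4) 4) ≡ -(p : ℤ) [ZMOD (p : ℤ) ^ 2]) ∧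
    (4 * ((Nat.choose (2 * p - 4 + 4) 4 : ℤ) - 5 * Nat.choose (p - 4 + 4) 4) ≡ 3 * (p : ℤ) [ZMOD (p : ℤ) ^ 2]) := by
  have choose_two_p (a : ℕ) (ha : a ≤ 4) :=
    cast_choose_sub_add_four_mul (n := 2 * p) (a := a) (by omega)
  have choose_p (a : ℕ) (ha : a ≤ 4) :=
    cast_choose_sub_add_four_mul (n := p) (a := a) (by omega)
  push_cast at choose_two_p
  refine ⟨?_, ?_, ?_⟩ <;> apply Int.modEq_of_dvd_sub_mul_six hp (by omega)
  · exact ⟨11 * (p : ℤ) ^ 2 + 6 * p + 1,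
      by linear_combination choose_two_p 2 (by norm_num) - 5 * choose_p 2 (by norm_num)⟩
  · exact ⟨11 * (p : ℤ) ^ 2 - 6 * p + 1,
      by linear_combination choose_two_p 3 (by norm_num) - 5 * choose_p 3 (by norm_num)⟩
  · exact ⟨11 * (p : ℤ) ^ 2 - 18 * p - 11,
      by linear_combination choose_two_p 4 (by norm_num) - 5 * choose_p 4 (by norm_num)⟩
end

section
/- Let p > 5 be prime, 1 ≤ a ≤ 4. Then the sum of x_1 over all nonnegative integer solutions (x_1,...,x_5) of x_1+...+x_5 = 2p-a with each x_i < p is congruent to 0 modulo p. -/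
/-!
Let `T` be the set of tuples counted. Permuting coordinates preserves `T`, so
`5 · ∑_{x ∈ T} x₀ = |T| · (2p - a)`, and as `p ∤ 5` it suffices to show `p ∣ |T|`. Since
`2p - a < 2p`, at most one coordinate of a solution of `∑ xᵢ = 2p - a` can be `≥ p`, and
subtracting `p` from it gives a solution of `∑ xᵢ = p - a`; hence
`C(2p - a + 4, 4) = |T| + 5 · C(p - a + 4, 4)`. Both binomial coefficients have top entry
`≡ 4 - a < 4 (mod p)`, so by Lucas' theorem both are divisible by `p`.
-/

open Finset

theorem Finset.Nat.card_antidiagonalTuple (k n : ℕ) :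
    #(Nat.antidiagonalTuple k n) = k.multichoose n := by
  rw [← Fintype.card_fin k, ← Sym.card_sym_eq_multichoose, ← Fintype.card_coe, Fintype.card_fin]
  exact Fintype.card_congr <| (Equiv.subtypeEquivRight fun _ => Nat.mem_antidiagonalTuple).trans
    (Sym.equivNatSumOfFintype (Fin k) n).symm

theorem Finset.Nat.card_antidiagonalTuple_succ (k n : ℕ) :
    #(Nat.antidiagonalTuple (k + 1) n) = (n + k).choose k := by
  rw [Nat.card_antidiagonalTuple, Nat.multichoose_eq, Nat.add_right_comm, Nat.add_sub_cancel,
    add_comm k, Nat.choose_symm_add]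

theorem Finset.Nat.card_filter_le_apply_antidiagonalTuple {k : ℕ} (j : Fin k) (p n : ℕ) :
    #((Nat.antidiagonalTuple k (n + p)).filter fun x => p ≤ x j) =
      #(Nat.antidiagonalTuple k n) := by
  have single_le {x : Fin k → ℕ} (h : p ≤ x j) : Pi.single j p ≤ x := fun i => by
    rcases eq_or_ne i j with rfl | hi <;> simp [*]
  refine card_nbij' (fun x => x - Pi.single j p) (fun y => y + Pi.single j p) ?_ ?_ ?_ ?_
  · intro x hx
    simp only [coe_filter, Set.mem_ofPred_eq, Nat.mem_antidiagonalTuple, mem_coe] at hx ⊢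
    have := congrArg (fun y => ∑ i, y i) (tsub_add_cancel_of_le (single_le hx.2))
    simp only [Pi.add_apply, sum_add_distrib, sum_pi_single', mem_univ, if_true] at this
    omega
  · intro y hy
    simp only [coe_filter, Set.mem_ofPred_eq, Nat.mem_antidiagonalTuple, mem_coe] at hy ⊢
    simp [sum_add_distrib, hy]
  · intro x hx
    exact tsub_add_cancel_of_le (single_le (mem_filter.mp hx).2)
  · intro y _
    exact add_tsub_cancel_right y _

def boundedTuples (k p n : ℕ) : Finset (Fin k → ℕ) :=
  (Fintype.piFinset fun _ : Fin k => range p).filter fun x => ∑ i, x i = n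

theorem mem_boundedTuples {k p n : ℕ} {x : Fin k → ℕ} :
    x ∈ boundedTuples k p n ↔ (∀ i, x i < p) ∧ ∑ i, x i = n := by
  simp [boundedTuples]

theorem card_antidiagonalTuple_add_eq {k p n : ℕ} (hn : n < p) :
    #(Nat.antidiagonalTuple k (n + p)) =
      #(boundedTuples k p (n + p)) + k * #(Nat.antidiagonalTuple k n) := by
  set A := Nat.antidiagonalTuple k (n + p)
  have h_bounded : A.filter (fun x => ∀ i, x i < p) = boundedTuples k p (n + p) := by
    ext x
    simp [A, mem_boundedTuples, and_comm, Nat.mem_antidiagonalTuple]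
  have h_unbounded : A.filter (fun x => ¬ ∀ i, x i < p) =
      univ.biUnion fun j => A.filter fun x => p ≤ x j := by
    ext x
    simp
  -- two coordinates `≥ p` would make the sum at least `2p > n + p`
  have h_disj : ((univ : Finset (Fin k)) : Set (Fin k)).PairwiseDisjoint
      fun j => A.filter fun x => p ≤ x j := by
    intro j _ j' _ hne
    refine disjoint_filter.mpr fun x hx hj hj' => ?_
    have := sum_le_sum_of_subset (f := x) (subset_univ {j, j'})
    rw [sum_pair hne, (Nat.mem_antidiagonalTuple.mp hx)] at this
    omega
  rw [← card_filter_add_card_filter_not (p := fun x => ∀ i, x i < p), h_bounded, h_unbounded,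
    card_biUnion h_disj]
  simp [A, Nat.card_filter_le_apply_antidiagonalTuple]

theorem sum_apply_boundedTuples_eq {k : ℕ} (p n : ℕ) (i j : Fin k) :
    ∑ x ∈ boundedTuples k p n, x i = ∑ x ∈ boundedTuples k p n, x j := by
  have swap_mem {x : Fin k → ℕ} (hx : x ∈ boundedTuples k p n) :
      x ∘ Equiv.swap i j ∈ boundedTuples k p n := by
    rw [mem_boundedTuples] at hx ⊢
    exact ⟨fun _ => hx.1 _, (Equiv.sum_comp _ x).trans hx.2⟩
  refine sum_nbij' (· ∘ Equiv.swap i j) (· ∘ Equiv.swap i j) (fun _ => swap_mem) (fun _ => swap_mem)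
    ?_ ?_ ?_ <;> intros <;> simp [Function.comp_def]

theorem card_mul_sum_apply_boundedTuples {k : ℕ} (p n : ℕ) (i : Fin k) :
    k * ∑ x ∈ boundedTuples k p n, x i = #(boundedTuples k p n) * n := by
  calc k * ∑ x ∈ boundedTuples k p n, x i
      = ∑ j : Fin k, ∑ x ∈ boundedTuples k p n, x j := by
        simp [sum_apply_boundedTuples_eq p n _ i]
    _ = ∑ x ∈ boundedTuples k p n, ∑ j, x j := sum_comm
    _ = #(boundedTuples k p n) * n := by
        rw [sum_congr rfl fun x hx => (mem_boundedTuples.mp hx).2, sum_const, smul_eq_mul]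

theorem Nat.Prime.dvd_choose_add_mul {p r k : ℕ} (hp : p.Prime) (hrk : r < k) (hkp : k < p)
    (q : ℕ) : p ∣ (r + p * q).choose k := by
  have := Fact.mk hp
  have lucas :=
    Choose.choose_modEq_choose_mod_mul_choose_div_nat (n := r + p * q) (k := k) (p := p)
  rw [Nat.add_mul_mod_self_left, Nat.mod_eq_of_lt (hrk.trans hkp), Nat.mod_eq_of_lt hkp,
    Nat.choose_eq_zero_of_lt hrk, zero_mul] at lucas
  exact Nat.modEq_zero_iff_dvd.mp lucas

theorem stmt3 (p : ℕ) (hp : p.Prime) (hp5 : 5 < p) (a : ℕ) (ha1 : 1 ≤ a) (ha4 : a ≤ 4) :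
    p ∣ ∑ x ∈ (Fintype.piFinset fun _ : Fin 5 => Finset.range p).filter
        (fun x => ∑ i, x i = 2 * p - a), x 0 := by
  show p ∣ ∑ x ∈ boundedTuples 5 p (2 * p - a), x 0
  rw [show 2 * p - a = p - a + p by omega]
  have p_dvd_card (m q : ℕ) (hm : m + 4 = (4 - a) + p * q) : p ∣ #(Nat.antidiagonalTuple 5 m) := by
    rw [Nat.card_antidiagonalTuple_succ, hm]
    exact hp.dvd_choose_add_mul (k := 4) (by omega) (by omega) q
  have h_bounded : p ∣ #(boundedTuples 5 p (p - a + p)) := by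
    have h_card := card_antidiagonalTuple_add_eq (k := 5) (show p - a < p by omega)
    refine (Nat.dvd_add_left ((p_dvd_card (p - a) 1 (by omega)).mul_left 5)).mp ?_
    rw [← h_card]
    exact p_dvd_card (p - a + p) 2 (by omega)
  have h_five : p ∣ 5 * ∑ x ∈ boundedTuples 5 p (p - a + p), x 0 := by
    rw [card_mul_sum_apply_boundedTuples]
    exact h_bounded.mul_right _
  exact (hp.dvd_mul.mp h_five).resolve_left fun h => by linarith [Nat.le_of_dvd (by norm_num) h]
end

section
/- For 1 ≤ u ≤ 2 and 1 ≤ a ≤ 4 and any prime p > 5, the binomial coefficient C(up - a + 4, 4) is congruent to ((-1)^(a-1)·(a-1)!·(4-a)!/4!)·u·p modulo p², i.e., 4!·C(up-a+4, 4) ≡ (-1)^(a-1)·(a-1)!·(4-a)!·u·p (mod p²) as integers. -/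
theorem stmt4 (p : ℕ) (hp : p.Prime) (hp5 : 5 < p) (u a : ℕ)
    (hu1 : 1 ≤ u) (hu2 : u ≤ 2) (ha1 : 1 ≤ a) (ha4 : a ≤ 4) :
    (Nat.factorial 4 : ℤ) * Nat.choose (u * p - a + 4) 4 ≡
      (-1) ^ (a - 1) * Nat.factorial (a - 1) * Nat.factorial (4 - a) * u * p
      [ZMOD (p : ℤ) ^ 2] := by
  have hap : a ≤ u * p := by
    calc a ≤ 4 := ha4
    _ ≤ p := by omega
    _ ≤ u * p := Nat.le_mul_of_pos_left p hu1
  set n := u * p - a + 4 with hn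
  have hdesc : n.descFactorial 4 = (n - 3) * ((n - 2) * ((n - 1) * n)) := by
    simp [Nat.descFactorial]
  have hfac : (Nat.factorial 4 : ℤ) * n.choose 4 =
      ((n : ℤ) - 3) * (((n : ℤ) - 2) * (((n : ℤ) - 1) * n)) := by
    rw [← Nat.cast_mul, ← Nat.descFactorial_eq_factorial_mul_choose, hdesc]
    push_cast [Nat.cast_sub (by omega : 3 ≤ n), Nat.cast_sub (by omega : 2 ≤ n),
      Nat.cast_sub (by omega : 1 ≤ n)]
    ring
  rw [hfac]
  have hnz : (n : ℤ) = (u : ℤ) * p - a + 4 := by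
    rw [hn]; push_cast [Nat.cast_sub hap]; ring
  have hdp : ((p : ℤ)) ∣ (u : ℤ) * p := ⟨(u : ℤ), mul_comm _ _⟩
  interval_cases a <;>
    refine Int.ModEq.symm (Int.modEq_iff_dvd.mpr ?_) <;>
    rw [hnz] <;> norm_num [Nat.factorial] <;>
    refine dvd_trans (pow_dvd_pow_of_dvd hdp 2) ?_
  · exact ⟨((u:ℤ)*p)^2 + 6*((u:ℤ)*p) + 11, by ring⟩
  · exact ⟨((u:ℤ)*p)^2 + 2*((u:ℤ)*p) - 1, by ring⟩
  · exact ⟨((u:ℤ)*p)^2 - 2*((u:ℤ)*p) - 1, by ring⟩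
  · exact ⟨((u:ℤ)*p)^2 - 6*((u:ℤ)*p) + 11, by ring⟩
end

section
/- Let p > n be a prime, r ≥ 1, and n ≥ 2. Then in ℤ/p^(r+1)ℤ, S_n^(1)(p^(r+1)) = Σ_{k=1}^{n-1} C(p-k+n-1, n-1) · S_n^(k)(p^r), where S_n^(k)(p^m) denotes the sum over positive integers l_1,...,l_n < p^m coprime to p with l_1+⋯+l_n = k·p^m of the product of the inverses of the l_i in ℤ/p^(r+1)ℤ. -/
/-!
Write each entry of a tuple counted by `S_n^(1)(p^(r+1))` as `l_i = m_i + p^r c_i` with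
`0 < m_i < p^r`. Then `∑ m_i = k p^r` for some `1 ≤ k ≤ n - 1`, and `c` runs over all
compositions of `p - k` into `n` nonnegative parts. As `p^(2r) ≡ 0 mod p^(r+1)`,
`1/(m_i + p^r c_i) = 1/m_i - p^r c_i/m_i²`, so summing `∏ 1/l_i` over `c` gives
`C(p-k+n-1, n-1) ∏ 1/m_i` minus `p^r` times a combination of the coordinate sums `∑_c c_i`.
By symmetry `n ∑_c c_i = (p - k) C(p-k+n-1, n-1)`, and `p` divides this binomial coefficient,
so each `p^r ∑_c c_i` vanishes modulo `p^(r+1)`.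
-/

open Finset Finset.Nat

/-- `S_n^(k)(p^m)` is the sum of `∏ i, (l i)⁻¹` over `coprimeTuples n p (p ^ m) (k * p ^ m)`. -/
def coprimeTuples (n p M s : ℕ) : Finset (Fin n → ℕ) :=
  (Fintype.piFinset fun _ : Fin n => Ioo 0 M).filter
    (fun l => (∀ i, Nat.Coprime (l i) p) ∧ ∑ i, l i = s)

lemma mem_coprimeTuples {n p M s : ℕ} {l : Fin n → ℕ} :
    l ∈ coprimeTuples n p M s ↔
      (∀ i, 0 < l i ∧ l i < M) ∧ (∀ i, Nat.Coprime (l i) p) ∧ ∑ i, l i = s := by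
  simp [coprimeTuples, Fintype.mem_piFinset]

namespace Finset.Nat

theorem card_antidiagonalTuple_s6 (k n : ℕ) : #(antidiagonalTuple k n) = k.multichoose n := by
  rw [← piAntidiag_univ_fin_eq_antidiagonalTuple, ← map_sym_eq_piAntidiag, card_map, sym_univ,
    card_univ, Sym.card_sym_eq_multichoose, Fintype.card_fin]

theorem sum_apply_antidiagonalTuple_eq (k n : ℕ) (i j : Fin k) :
    ∑ c ∈ antidiagonalTuple k n, c i = ∑ c ∈ antidiagonalTuple k n, c j := by
  refine sum_nbij' (· ∘ Equiv.swap i j) (· ∘ Equiv.swap i j) ?_ ?_ ?_ ?_ ?_ <;>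
    simp [mem_antidiagonalTuple, Equiv.sum_comp, Function.comp_def]

theorem mul_sum_apply_antidiagonalTuple (k n : ℕ) (i : Fin k) :
    k * ∑ c ∈ antidiagonalTuple k n, c i = #(antidiagonalTuple k n) * n := calc
  _ = ∑ j : Fin k, ∑ c ∈ antidiagonalTuple k n, c j := by
    simp [sum_apply_antidiagonalTuple_eq k n _ i]
  _ = ∑ c ∈ antidiagonalTuple k n, ∑ j, c j := sum_comm
  _ = _ := by rw [sum_congr rfl fun c hc => mem_antidiagonalTuple.mp hc, sum_const, smul_eq_mul]

theorem dvd_sum_apply_antidiagonalTuple {p k n : ℕ} (hp : p.Prime) (hkp : k < p)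
    (hdvd : p ∣ #(antidiagonalTuple k n)) (i : Fin k) :
    p ∣ ∑ c ∈ antidiagonalTuple k n, c i := by
  have hk : ¬ p ∣ k := Nat.not_dvd_of_pos_of_lt i.pos hkp
  refine (hp.dvd_mul.mp ?_).resolve_left hk
  rw [mul_sum_apply_antidiagonalTuple]
  exact dvd_mul_of_dvd_left hdvd n

end Finset.Nat

theorem prod_one_add_mul_of_sq_eq_zero {R ι : Type*} [CommSemiring R] (s : Finset ι) {ε : R}
    (hε : ε ^ 2 = 0) (y : ι → R) : ∏ i ∈ s, (1 + ε * y i) = 1 + ε * ∑ i ∈ s, y i := by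
  induction s using Finset.cons_induction with
  | empty => simp
  | cons a s ha ih =>
    rw [prod_cons, sum_cons, ih]
    calc (1 + ε * y a) * (1 + ε * ∑ i ∈ s, y i)
        = 1 + ε * (y a + ∑ i ∈ s, y i) + ε ^ 2 * (y a * ∑ i ∈ s, y i) := by ring
      _ = _ := by rw [hε, zero_mul, add_zero]

theorem ZMod.inv_add_of_sq_eq_zero {N : ℕ} {u ε : ZMod N} (hu : IsUnit u) (hε : ε ^ 2 = 0) :
    (u + ε)⁻¹ = u⁻¹ * (1 - ε * u⁻¹) :=
  ZMod.inv_eq_of_mul_eq_one N _ _ <| by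
    linear_combination (1 - ε * u⁻¹) * ZMod.mul_inv_of_unit u hu - u⁻¹ ^ 2 * hε

theorem ZMod.sum_prod_inv_add_mul {N : ℕ} {ι : Type*} [Fintype ι] (C : Finset (ι → ℕ))
    {u : ι → ZMod N} (hu : ∀ i, IsUnit (u i)) {ε : ZMod N} (hε : ε ^ 2 = 0)
    (hC : ∀ i, ε * ∑ c ∈ C, (c i : ZMod N) = 0) :
    ∑ c ∈ C, ∏ i, (u i + ε * c i)⁻¹ = #C * ∏ i, (u i)⁻¹ := by
  have hterm (c : ι → ℕ) : ∏ i, (u i + ε * c i)⁻¹ =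
      (∏ i, (u i)⁻¹) * (1 - ε * ∑ i, c i * (u i)⁻¹) := by
    have hεc (i : ι) : (ε * c i) ^ 2 = 0 := by rw [mul_pow, hε, zero_mul]
    have hneg (i : ι) : 1 - ε * c i * (u i)⁻¹ = 1 + ε * -(c i * (u i)⁻¹) := by ring
    simp_rw [ZMod.inv_add_of_sq_eq_zero (hu _) (hεc _), prod_mul_distrib, hneg,
      prod_one_add_mul_of_sq_eq_zero _ hε, sum_neg_distrib, mul_neg, sub_eq_add_neg]
  have hlin : ∑ c ∈ C, ε * ∑ i, (c i : ZMod N) * (u i)⁻¹ = 0 := by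
    rw [← mul_sum, sum_comm, mul_sum]
    refine sum_eq_zero fun i _ => ?_
    rw [← sum_mul, ← mul_assoc, hC i, zero_mul]
  rw [sum_congr rfl fun c _ => hterm c, ← mul_sum, sum_sub_distrib, hlin, sum_const,
    nsmul_one, sub_zero, mul_comm]

theorem Nat.coprime_add_mul_left_left_of_dvd {p q : ℕ} (m c : ℕ) (hpq : p ∣ q) :
    Nat.Coprime (m + q * c) p ↔ Nat.Coprime m p := by
  obtain ⟨t, rfl⟩ := hpq
  rw [mul_assoc]
  exact Nat.coprime_add_mul_left_left m p (t * c)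

theorem Nat.coprime_mod_left_iff_of_dvd {p q : ℕ} (m : ℕ) (hpq : p ∣ q) :
    Nat.Coprime (m % q) p ↔ Nat.Coprime m p := by
  conv_rhs => rw [← Nat.mod_add_div m q]
  exact (Nat.coprime_add_mul_left_left_of_dvd _ _ hpq).symm

theorem sum_mod_add_mul_sum_div {n : ℕ} (l : Fin n → ℕ) (q : ℕ) :
    ∑ i, l i % q + q * ∑ i, l i / q = ∑ i, l i := by
  rw [mul_sum, ← sum_add_distrib]
  exact sum_congr rfl fun i _ => Nat.mod_add_div (l i) q

section Digits

variable {n p q k : ℕ}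

theorem add_mul_mem_coprimeTuples (hpq : p ∣ q) (hk : k ∈ Icc 1 p) {m c : Fin n → ℕ}
    (hm : m ∈ coprimeTuples n p q (k * q)) (hc : c ∈ antidiagonalTuple n (p - k)) :
    (fun i => m i + q * c i) ∈ coprimeTuples n p (p * q) (p * q) := by
  obtain ⟨hbd, hcop, hmsum⟩ := mem_coprimeTuples.mp hm
  rw [mem_antidiagonalTuple] at hc
  rw [mem_Icc] at hk
  refine mem_coprimeTuples.mpr ⟨fun i => ⟨Nat.add_pos_left (hbd i).1 _, ?_⟩,
    fun i => (Nat.coprime_add_mul_left_left_of_dvd _ _ hpq).mpr (hcop i), ?_⟩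
  · have hci : c i + 1 ≤ p := by
      have := single_le_sum (fun j _ => Nat.zero_le (c j)) (mem_univ i)
      omega
    calc m i + q * c i < q * (c i + 1) := by linarith [(hbd i).2]
      _ ≤ p * q := by rw [mul_comm p]; exact Nat.mul_le_mul_left q hci
  · rw [sum_add_distrib, ← mul_sum, hmsum, hc, mul_comm q, ← add_mul, Nat.add_sub_cancel' hk.2]

theorem digits_mem_of_mem_coprimeTuples (hp : 1 < p) (hpq : p ∣ q) (hq : 0 < q)
    {l : Fin n → ℕ} (hl : l ∈ coprimeTuples n p (p * q) (p * q)) :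
    p - ∑ i, l i / q ∈ Icc 1 (n - 1) ∧
      (fun i => l i % q) ∈ coprimeTuples n p q ((p - ∑ i, l i / q) * q) ∧
      (fun i => l i / q) ∈ antidiagonalTuple n (p - (p - ∑ i, l i / q)) := by
  obtain ⟨-, hcop, hsum⟩ := mem_coprimeTuples.mp hl
  have hdigits := sum_mod_add_mul_sum_div l q
  rw [hsum] at hdigits
  set t := ∑ i, l i / q
  have hpos (i : Fin n) : 0 < l i % q := Nat.pos_of_ne_zero fun h0 => hp.ne' <|
    (Nat.coprime_zero_left _).mp (h0 ▸ (Nat.coprime_mod_left_iff_of_dvd _ hpq).mpr (hcop i))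
  have hn : (univ : Finset (Fin n)).Nonempty := by
    refine univ_nonempty_iff.mpr ⟨⟨0, Nat.pos_of_ne_zero ?_⟩⟩
    rintro rfl
    simp only [univ_eq_empty, sum_empty] at hsum
    exact (Nat.mul_pos (by omega) hq).ne hsum
  have hlow : 0 < ∑ i, l i % q := sum_pos (fun i _ => hpos i) hn
  have hupp : ∑ i, l i % q < n * q := by
    calc ∑ i, l i % q < ∑ _i : Fin n, q := sum_lt_sum_of_nonempty hn fun i _ => Nat.mod_lt _ hq
      _ = n * q := by simp
  rw [mul_comm q t] at hdigits
  have ht : t < p := Nat.lt_of_mul_lt_mul_right (a := q) (by omega)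
  have hmsum : ∑ i, l i % q = (p - t) * q := by
    rw [Nat.sub_mul]
    omega
  refine ⟨mem_Icc.mpr ⟨by omega, ?_⟩, mem_coprimeTuples.mpr ⟨fun i => ⟨hpos i, Nat.mod_lt _ hq⟩,
    fun i => (Nat.coprime_mod_left_iff_of_dvd _ hpq).mpr (hcop i), hmsum⟩,
    mem_antidiagonalTuple.mpr (by omega)⟩
  have : p - t < n := Nat.lt_of_mul_lt_mul_right (a := q) (hmsum ▸ hupp)
  omega

theorem sum_coprimeTuples_mul_eq {M : Type*} [AddCommMonoid M] (f : (Fin n → ℕ) → M)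
    (hp : 1 < p) (hpq : p ∣ q) (hq : 0 < q) (hnp : n ≤ p) :
    ∑ l ∈ coprimeTuples n p (p * q) (p * q), f l =
      ∑ k ∈ Icc 1 (n - 1), ∑ m ∈ coprimeTuples n p q (k * q),
        ∑ c ∈ antidiagonalTuple n (p - k), f (fun i => m i + q * c i) := by
  rw [eq_comm]
  calc _ = ∑ x ∈ (Icc 1 (n - 1)).sigma fun k =>
          coprimeTuples n p q (k * q) ×ˢ antidiagonalTuple n (p - k),
        f (fun i => x.2.1 i + q * x.2.2 i) := by
        simp only [sum_sigma, sum_product]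
    _ = _ := by
      refine sum_nbij' (fun x i => x.2.1 i + q * x.2.2 i)
        (fun l => ⟨p - ∑ i, l i / q, fun i => l i % q, fun i => l i / q⟩) ?_ ?_ ?_ ?_
        (fun _ _ => rfl)
      · rintro ⟨k, m, c⟩ hx
        simp only [mem_sigma, mem_product, mem_Icc] at hx
        obtain ⟨hk, hm, hc⟩ := hx
        exact add_mul_mem_coprimeTuples hpq (mem_Icc.mpr ⟨hk.1, by omega⟩) hm hc
      · intro l hl
        obtain ⟨hk, hm, hc⟩ := digits_mem_of_mem_coprimeTuples hp hpq hq hl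
        exact mem_sigma.mpr ⟨hk, mem_product.mpr ⟨hm, hc⟩⟩
      · rintro ⟨k, m, c⟩ hx
        simp only [mem_sigma, mem_product, mem_Icc] at hx
        obtain ⟨hk, hm, hc⟩ := hx
        have hmq (i : Fin n) : m i < q := ((mem_coprimeTuples.mp hm).1 i).2
        have hmod (i : Fin n) : (m i + q * c i) % q = m i := by
          rw [Nat.add_mul_mod_self_left, Nat.mod_eq_of_lt (hmq i)]
        have hdiv (i : Fin n) : (m i + q * c i) / q = c i := by
          rw [Nat.add_mul_div_left _ _ hq, Nat.div_eq_of_lt (hmq i), zero_add]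
        simp only [hmod, hdiv, mem_antidiagonalTuple.mp hc]
        rw [Nat.sub_sub_self (by omega)]
      · intro l _
        funext i
        exact Nat.mod_add_div (l i) q

end Digits

theorem sum_antidiagonalTuple_prod_inv_add_pow_mul {p n r k : ℕ} (hp : p.Prime) (hnp : n < p)
    (hr : 1 ≤ r) (hk : k ∈ Icc 1 (n - 1)) {m : Fin n → ℕ} (hm : ∀ i, (m i).Coprime p) :
    ∑ c ∈ antidiagonalTuple n (p - k), ∏ i, ((m i + p ^ r * c i : ℕ) : ZMod (p ^ (r + 1)))⁻¹ =
      ((p - k + n - 1).choose (n - 1) : ZMod (p ^ (r + 1))) *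
        ∏ i, (m i : ZMod (p ^ (r + 1)))⁻¹ := by
  rw [mem_Icc] at hk
  have hcard : #(antidiagonalTuple n (p - k)) = (p - k + n - 1).choose (n - 1) := by
    rw [card_antidiagonalTuple_s6, Nat.multichoose_eq, show n + (p - k) - 1 = p - k + (n - 1) by omega,
      Nat.choose_symm_add, Nat.add_sub_assoc (by omega)]
  have hdvd : p ∣ #(antidiagonalTuple n (p - k)) :=
    hcard ▸ hp.dvd_choose (by omega) (by omega) (by omega)
  have hq : ((p ^ r : ℕ) : ZMod (p ^ (r + 1))) ^ 2 = 0 := by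
    rw [← Nat.cast_pow, ZMod.natCast_eq_zero_iff, ← pow_mul]
    exact pow_dvd_pow p (by omega)
  have hC (i : Fin n) : ((p ^ r : ℕ) : ZMod (p ^ (r + 1))) *
      ∑ c ∈ antidiagonalTuple n (p - k), (c i : ZMod (p ^ (r + 1))) = 0 := by
    rw [← Nat.cast_sum, ← Nat.cast_mul, ZMod.natCast_eq_zero_iff, pow_succ]
    exact mul_dvd_mul_left _ (dvd_sum_apply_antidiagonalTuple hp (by omega) hdvd i)
  have hu (i : Fin n) : IsUnit (m i : ZMod (p ^ (r + 1))) :=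
    (ZMod.isUnit_iff_coprime _ _).mpr ((hm i).pow_right _)
  push_cast at hq hC ⊢
  rw [ZMod.sum_prod_inv_add_mul _ hu hq hC, hcard]

theorem stmt6_general (p n r : ℕ) (hp : p.Prime) (hpn : n < p) (hr : 1 ≤ r) :
    (∑ l ∈ (Fintype.piFinset fun _ : Fin n => Finset.Ioo 0 (p ^ (r + 1))).filter
        (fun l => (∀ i, Nat.Coprime (l i) p) ∧ ∑ i, l i = 1 * p ^ (r + 1)),
      ∏ i, ((l i : ZMod (p ^ (r + 1))))⁻¹) =
    ∑ k ∈ Finset.Icc 1 (n - 1), (Nat.choose (p - k + n - 1) (n - 1) : ZMod (p ^ (r + 1))) *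
      ∑ l ∈ (Fintype.piFinset fun _ : Fin n => Finset.Ioo 0 (p ^ r)).filter
        (fun l => (∀ i, Nat.Coprime (l i) p) ∧ ∑ i, l i = k * p ^ r),
      ∏ i, ((l i : ZMod (p ^ (r + 1))))⁻¹ := by
  have hdecomp := sum_coprimeTuples_mul_eq (fun l => ∏ i, ((l i : ZMod (p ^ (r + 1))))⁻¹)
    hp.one_lt (dvd_pow_self p (by omega)) (pow_pos hp.pos r) hpn.le
  rw [← pow_succ'] at hdecomp
  rw [one_mul]
  refine hdecomp.trans (sum_congr rfl fun k hk => ?_)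
  rw [mul_sum]
  exact sum_congr rfl fun m hm =>
    sum_antidiagonalTuple_prod_inv_add_pow_mul hp hpn hr hk (mem_coprimeTuples.mp hm).2.1

theorem stmt6 (p n r : ℕ) (hp : p.Prime) (hn : 2 ≤ n) (hpn : n < p) (hr : 1 ≤ r) :
    (∑ l ∈ (Fintype.piFinset fun _ : Fin n => Finset.Ioo 0 (p ^ (r + 1))).filter
        (fun l => (∀ i, Nat.Coprime (l i) p) ∧ ∑ i, l i = 1 * p ^ (r + 1)),
      ∏ i, ((l i : ZMod (p ^ (r + 1))))⁻¹) =
    ∑ k ∈ Finset.Icc 1 (n - 1), (Nat.choose (p - k + n - 1) (n - 1) : ZMod (p ^ (r + 1))) *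
      ∑ l ∈ (Fintype.piFinset fun _ : Fin n => Finset.Ioo 0 (p ^ r)).filter
        (fun l => (∀ i, Nat.Coprime (l i) p) ∧ ∑ i, l i = k * p ^ r),
      ∏ i, ((l i : ZMod (p ^ (r + 1))))⁻¹ :=
  stmt6_general p n r hp hpn hr
end

section
/- Let α be a positive odd integer and p ≥ α + 3 a prime. Then Σ_{l=1}^{p-1} 1/l^α ≡ 0 (mod p²), where the sum is taken in ℤ/p²ℤ using inverses of the units l. -/
/-!
In `ZMod (p²)` the element `t = p` squares to zero, so for a unit `x` the inverse of `t - x` is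
`-x⁻¹ - x⁻¹² t`; since `α` is odd this gives `x⁻ᵅ + (p - x)⁻ᵅ = -α p x⁻⁽ᵅ⁺¹⁾`.
Pairing `l` with `p - l` therefore shows `2 S = -α p ∑ l⁻⁽ᵅ⁺¹⁾`, and `p · z` only depends on
`z mod p`, where `∑ l⁻⁽ᵅ⁺¹⁾ = ∑ l^(α+1) = 0` because `0 < α + 1 < p - 1`.
-/

open Finset

section SquareZero

variable {R : Type*} [CommRing R] {t : R}

theorem add_pow_succ_of_mul_self_eq_zero (ht : t * t = 0) (a : R) (n : ℕ) :
    (a + t) ^ (n + 1) = a ^ (n + 1) + (n + 1) * a ^ n * t := by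
  induction n with
  | zero => ring
  | succ n ih =>
    rw [pow_succ, ih]
    push_cast
    linear_combination ((n : R) + 1) * a ^ n * ht

theorem pow_add_neg_sub_pow_of_mul_self_eq_zero (ht : t * t = 0) (a : R) {n : ℕ} (hn : Odd n) :
    a ^ n + (-a - a ^ 2 * t) ^ n = -(n * a ^ (n + 1) * t) := by
  obtain ⟨k, rfl⟩ := hn
  have hsq : (a ^ 2 * t) * (a ^ 2 * t) = 0 := by linear_combination a ^ 4 * ht
  rw [show -a - a ^ 2 * t = -(a + a ^ 2 * t) by ring, Odd.neg_pow ⟨k, rfl⟩,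
    add_pow_succ_of_mul_self_eq_zero hsq]
  push_cast
  ring

end SquareZero

namespace ZMod

theorem inv_pow_of_isUnit {n : ℕ} {x : ZMod n} (hx : IsUnit x) (m : ℕ) : (x ^ m)⁻¹ = x⁻¹ ^ m :=
  ZMod.inv_eq_of_mul_eq_one _ _ _ (by rw [← mul_pow, mul_inv_of_unit x hx, one_pow])

theorem inv_sub_of_mul_self_eq_zero {n : ℕ} {t x : ZMod n} (ht : t * t = 0) (hx : IsUnit x) :
    (t - x)⁻¹ = -x⁻¹ - x⁻¹ ^ 2 * t :=
  ZMod.inv_eq_of_mul_eq_one _ _ _ <| by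
    linear_combination (1 + x⁻¹ * t) * mul_inv_of_unit x hx - x⁻¹ ^ 2 * ht

theorem map_inv_of_isUnit {m n : ℕ} (f : ZMod m →+* ZMod n) {x : ZMod m} (hx : IsUnit x) :
    f x⁻¹ = (f x)⁻¹ :=
  (ZMod.inv_eq_of_mul_eq_one _ _ _ (by rw [← map_mul, mul_inv_of_unit x hx, map_one])).symm

theorem natCast_self_mul_self_eq_zero (p : ℕ) : (p : ZMod (p ^ 2)) * p = 0 := by
  rw [← Nat.cast_mul, ← sq, natCast_self]

theorem natCast_self_mul_eq_zero {p : ℕ} {z : ZMod (p ^ 2)}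
    (hz : castHom (dvd_pow_self p two_ne_zero) (ZMod p) z = 0) : (p : ZMod (p ^ 2)) * z = 0 := by
  rw [← intCast_zmod_cast z, map_intCast, intCast_zmod_eq_zero_iff_dvd] at hz
  obtain ⟨c, hc⟩ := hz
  rw [← intCast_zmod_cast z, hc, Int.cast_mul, Int.cast_natCast, ← mul_assoc,
    natCast_self_mul_self_eq_zero, zero_mul]

theorem sum_range_natCast {n : ℕ} [NeZero n] {M : Type*} [AddCommMonoid M] (f : ZMod n → M) :
    ∑ i ∈ range n, f i = ∑ x, f x :=
  sum_nbij' (fun i ↦ (i : ZMod n)) val (fun _ _ ↦ mem_univ _)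
    (fun x _ ↦ mem_range.2 (val_lt x)) (fun _ hi ↦ val_cast_of_lt (mem_range.1 hi))
    (fun x _ ↦ natCast_zmod_val x) (fun _ _ ↦ rfl)

theorem sum_Ico_inv_pow_eq_zero {p : ℕ} [Fact p.Prime] {m : ℕ} (hm₀ : 0 < m) (hm : m < p - 1) :
    ∑ l ∈ Ico 1 p, (l : ZMod p)⁻¹ ^ m = 0 := by
  have hinv : ∑ x : ZMod p, x⁻¹ ^ m = ∑ x : ZMod p, x ^ m :=
    Fintype.sum_equiv (Equiv.inv _) _ _ fun _ ↦ rfl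
  have hsum := sum_range_eq_add_Ico (fun l : ℕ ↦ (l : ZMod p)⁻¹ ^ m) (Fact.out : p.Prime).pos
  rw [sum_range_natCast (fun x ↦ x⁻¹ ^ m), hinv,
    FiniteField.sum_pow_lt_card_sub_one _ _ (by rwa [card])] at hsum
  simpa [zero_pow hm₀.ne'] using hsum.symm

theorem inv_pow_add_inv_pow_sub {p l α : ℕ} (hl : l < p) (hu : IsUnit (l : ZMod (p ^ 2)))
    (hα : Odd α) :
    (l : ZMod (p ^ 2))⁻¹ ^ α + ((p - l : ℕ) : ZMod (p ^ 2))⁻¹ ^ α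
      = -(α * (l : ZMod (p ^ 2))⁻¹ ^ (α + 1) * p) := by
  rw [Nat.cast_sub hl.le, inv_sub_of_mul_self_eq_zero (natCast_self_mul_self_eq_zero p) hu]
  exact pow_add_neg_sub_pow_of_mul_self_eq_zero (natCast_self_mul_self_eq_zero p) _ hα

end ZMod

theorem stmt7_general (p α : ℕ) (hp : p.Prime) (hodd : Odd α) (hpα : α + 3 ≤ p) :
    (∑ l ∈ Finset.Ico 1 p, ((l : ZMod (p ^ 2)) ^ α)⁻¹) = 0 := by
  have := Fact.mk hp
  have hunit {l : ℕ} (hl : l ∈ Ico 1 p) : IsUnit (l : ZMod (p ^ 2)) :=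
    (ZMod.isUnit_natCast_iff_not_dvd_pow hp two_pos).2
      (Nat.not_dvd_of_pos_of_lt (mem_Ico.1 hl).1 (mem_Ico.1 hl).2)
  set S := ∑ l ∈ Ico 1 p, (l : ZMod (p ^ 2))⁻¹ ^ α
  set T := ∑ l ∈ Ico 1 p, (l : ZMod (p ^ 2))⁻¹ ^ (α + 1)
  have hS : (∑ l ∈ Ico 1 p, ((l : ZMod (p ^ 2)) ^ α)⁻¹) = S :=
    sum_congr rfl fun l hl ↦ ZMod.inv_pow_of_isUnit (hunit hl) α
  have hreflect : ∑ l ∈ Ico 1 p, ((p - l : ℕ) : ZMod (p ^ 2))⁻¹ ^ α = S := by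
    simpa using sum_Ico_reflect (fun l ↦ (l : ZMod (p ^ 2))⁻¹ ^ α) 1 (Nat.le_succ p)
  have hpair : S + S = -(α * T * p) := by
    nth_rw 2 [← hreflect]
    rw [← sum_add_distrib, mul_sum, sum_mul, ← sum_neg_distrib]
    exact sum_congr rfl fun l hl ↦
      ZMod.inv_pow_add_inv_pow_sub (mem_Ico.1 hl).2 (hunit hl) hodd
  have hT : (p : ZMod (p ^ 2)) * T = 0 := by
    refine ZMod.natCast_self_mul_eq_zero ?_
    rw [map_sum, ← ZMod.sum_Ico_inv_pow_eq_zero (p := p) α.succ_pos (by omega)]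
    refine sum_congr rfl fun l hl ↦ ?_
    rw [map_pow, ZMod.map_inv_of_isUnit _ (hunit hl), map_natCast]
  have h2 : IsUnit (2 : ZMod (p ^ 2)) := by
    exact_mod_cast hunit (l := 2) (mem_Ico.2 ⟨one_le_two, by omega⟩)
  rw [hS]
  refine h2.mul_left_cancel ?_
  linear_combination hpair - α * hT

theorem stmt7 (p α : ℕ) (hp : p.Prime) (hα : 0 < α) (hodd : Odd α) (hpα : α + 3 ≤ p) :
    (∑ l ∈ Finset.Ico 1 p, ((l : ZMod (p ^ 2)) ^ α)⁻¹) = 0 :=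
  stmt7_general p α hp hodd hpα
end

section
/- Let α be a positive even integer and p ≥ α + 3 a prime. Then Σ_{l=1}^{p-1} 1/l^α ≡ 0 (mod p), where inverses are taken in ℤ/pℤ. -/
open Finset

theorem ZMod.sum_Ico_one_natCast {M : Type*} [AddCommMonoid M] {n : ℕ} [NeZero n]
    (f : ZMod n → M) (hf : f 0 = 0) :
    ∑ l ∈ Ico 1 n, f l = ∑ x : ZMod n, f x := by
  have h_range : ∑ l ∈ range n, f l = ∑ x : ZMod n, f x :=
    sum_nbij' (fun l => (l : ZMod n)) ZMod.val (by simp)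
      (fun x _ => mem_range.2 (ZMod.val_lt x))
      (fun l hl => ZMod.val_natCast_of_lt (mem_range.1 hl))
      (fun x _ => ZMod.natCast_zmod_val x) (fun _ _ => rfl)
  rw [← h_range, sum_range_eq_add_Ico _ (NeZero.pos n), Nat.cast_zero, hf, zero_add]

theorem sum_inv_pow_eq_sum_pow {K : Type*} [DivisionRing K] [Fintype K] (i : ℕ) :
    ∑ x : K, (x ^ i)⁻¹ = ∑ x : K, x ^ i :=
  Fintype.sum_equiv (Equiv.inv K) _ _ fun x => by rw [Equiv.inv_apply, inv_pow]

theorem stmt8_general (p α : ℕ) (hp : p.Prime) (hα : 0 < α) (hpα : α + 3 ≤ p) :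
    (∑ l ∈ Finset.Ico 1 p, ((l : ZMod p) ^ α)⁻¹) = 0 := by
  have : Fact p.Prime := ⟨hp⟩
  rw [ZMod.sum_Ico_one_natCast (fun x => (x ^ α)⁻¹) (by simp [hα.ne']),
    sum_inv_pow_eq_sum_pow]
  exact FiniteField.sum_pow_lt_card_sub_one (ZMod p) α (by rw [ZMod.card]; omega)

theorem stmt8 (p α : ℕ) (hp : p.Prime) (hα : 0 < α) (heven : Even α) (hpα : α + 3 ≤ p) :
    (∑ l ∈ Finset.Ico 1 p, ((l : ZMod p) ^ α)⁻¹) = 0 :=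
  stmt8_general p α hp hα hpα
end

section
/- Let p be an odd prime and α a positive integer with α ≤ p - 3. Then in ℤ/p³ℤ, Σ_{p < l < 2p} 1/l^α = Σ_{0 < l < p} 1/l^α - α·p·Σ_{0 < l < p} 1/l^(α+1) + (α(α+1)/2)·p²·Σ_{0 < l < p} 1/l^(α+2), where all inverses are taken in ℤ/p³ℤ. -/
/-!
Write `p < l < 2p` as `l = k + p` with `0 < k < p`. In `ZMod (p ^ 3)` the element `q = p`
satisfies `q ^ 3 = 0`, so `(u + q) ^ α * (u ^ 2 - α q u + binom(α + 1, 2) q ^ 2) = u ^ (α + 2)`: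
the second factor is `u ^ 2` times the binomial series of `(1 + q / u) ^ (-α)` cut off at `q ^ 2`.
Dividing by `u ^ (α + 2) (u + q) ^ α` expands each `1 / (k + p) ^ α` termwise.
-/

open Finset

theorem add_pow_mul_eq_pow_add_two_of_pow_three_eq_zero {R : Type*} [CommRing R] (u q : R)
    (hq : q ^ 3 = 0) (n : ℕ) :
    (u + q) ^ n * (u ^ 2 - n * q * u + ((n + 1).choose 2 : ℕ) * q ^ 2) = u ^ (n + 2) := by
  induction n with
  | zero => simp
  | succ n ih =>
    rw [Nat.choose_succ_succ' (n + 1), Nat.choose_one_right, show n + 1 + 2 = n + 2 + 1 from rfl,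
      pow_succ' u (n + 2), ← ih]
    push_cast
    linear_combination ((((n + 1).choose 2 : ℕ) : R) + n + 1) * (u + q) ^ n * hq

theorem ZMod.inv_pow_add_of_pow_three_eq_zero {n : ℕ} {u q : ZMod n} (hu : IsUnit u)
    (hq : q ^ 3 = 0) (α : ℕ) :
    ((u + q) ^ α)⁻¹ = (u ^ α)⁻¹ - α * q * (u ^ (α + 1))⁻¹
      + ((α + 1).choose 2 : ℕ) * q ^ 2 * (u ^ (α + 2))⁻¹ := by
  have hI : u ^ (α + 2) * (u ^ (α + 2))⁻¹ = 1 := ZMod.mul_inv_of_unit _ (hu.pow _)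
  have inv_pow_eq (m j : ℕ) (h : m + j = α + 2) : (u ^ m)⁻¹ = u ^ j * (u ^ (α + 2))⁻¹ :=
    ZMod.inv_eq_of_mul_eq_one _ _ _ (by rw [← mul_assoc, ← pow_add, h, hI])
  rw [ZMod.inv_eq_of_mul_eq_one _ _
      ((u ^ 2 - α * q * u + ((α + 1).choose 2 : ℕ) * q ^ 2) * (u ^ (α + 2))⁻¹ : ZMod n)
      (by rw [← mul_assoc, add_pow_mul_eq_pow_add_two_of_pow_three_eq_zero u q hq, hI]),
    inv_pow_eq α 2 rfl, inv_pow_eq (α + 1) 1 rfl]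
  ring

theorem stmt11_general (p α : ℕ) (hp : p.Prime) :
    (∑ l ∈ Finset.Ioo p (2 * p), ((l : ZMod (p ^ 3)) ^ α)⁻¹) =
      (∑ l ∈ Finset.Ioo 0 p, ((l : ZMod (p ^ 3)) ^ α)⁻¹)
      - (α : ZMod (p ^ 3)) * p * (∑ l ∈ Finset.Ioo 0 p, ((l : ZMod (p ^ 3)) ^ (α + 1))⁻¹)
      + ((α * (α + 1) / 2 : ℕ) : ZMod (p ^ 3)) * (p : ZMod (p ^ 3)) ^ 2 *
          (∑ l ∈ Finset.Ioo 0 p, ((l : ZMod (p ^ 3)) ^ (α + 2))⁻¹) := by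
  have hp3 : (p : ZMod (p ^ 3)) ^ 3 = 0 := by exact_mod_cast ZMod.natCast_self (p ^ 3)
  have hshift : Ioo p (2 * p) = (Ioo 0 p).map (addRightEmbedding p) := by
    rw [map_add_right_Ioo, zero_add, two_mul]
  have hchoose : α * (α + 1) / 2 = (α + 1).choose 2 := by
    rw [Nat.choose_two_right, Nat.add_sub_cancel, mul_comm]
  rw [hshift, sum_map, hchoose, mul_sum, mul_sum, ← sum_sub_distrib, ← sum_add_distrib]
  refine sum_congr rfl fun k hk => ?_
  have hk_unit : IsUnit (k : ZMod (p ^ 3)) := by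
    rw [mem_Ioo] at hk
    exact (ZMod.isUnit_iff_coprime k _).mpr <| Nat.Coprime.pow_right 3 <|
      (hp.coprime_iff_not_dvd.mpr (Nat.not_dvd_of_pos_of_lt hk.1 hk.2)).symm
  simp only [addRightEmbedding_apply, Nat.cast_add,
    ZMod.inv_pow_add_of_pow_three_eq_zero hk_unit hp3, mul_assoc]

theorem stmt11 (p α : ℕ) (hp : p.Prime) (hodd : Odd p) (hα : 1 ≤ α) (hαp : α ≤ p - 3) :
    (∑ l ∈ Finset.Ioo p (2 * p), ((l : ZMod (p ^ 3)) ^ α)⁻¹) =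
      (∑ l ∈ Finset.Ioo 0 p, ((l : ZMod (p ^ 3)) ^ α)⁻¹)
      - (α : ZMod (p ^ 3)) * p * (∑ l ∈ Finset.Ioo 0 p, ((l : ZMod (p ^ 3)) ^ (α + 1))⁻¹)
      + ((α * (α + 1) / 2 : ℕ) : ZMod (p ^ 3)) * (p : ZMod (p ^ 3)) ^ 2 *
          (∑ l ∈ Finset.Ioo 0 p, ((l : ZMod (p ^ 3)) ^ (α + 2))⁻¹) :=
  stmt11_general p α hp
end

section
/- Let p > 5 be a prime. Then the number of nonnegative integer solutions (x_1,...,x_5) with each x_i < p of x_1+...+x_5 = 2p-a is divisible by p for every a with 1 ≤ a ≤ 4. -/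
lemma card_tuple (k n : ℕ) :
    (Finset.Nat.antidiagonalTuple k n).card = (n + k - 1).choose n := by
  have h1 : Nat.card (Sym (Fin k) n) = Nat.multichoose k n := by
    simp [Nat.card_eq_fintype_card, Sym.card_sym_eq_multichoose]
  have h2 := Nat.card_congr (Sym.equivNatSumOfFintype (Fin k) n)
  have h3 : Nat.card {x // x ∈ Finset.Nat.antidiagonalTuple k n}
      = Nat.card {P : Fin k → ℕ // ∑ i, P i = n} :=
    Nat.card_congr (Equiv.subtypeEquivRight fun x => Finset.Nat.mem_antidiagonalTuple)
  rw [← Nat.card_eq_finsetCard, h3, ← h2, h1, Nat.multichoose_eq, Nat.add_comm]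

lemma dvd_choose4 (p m c : ℕ) (hp : p.Prime) (hp5 : 5 < p) (hc : p ∣ c)
    (h1 : m - 3 ≤ c) (h2 : c ≤ m) (hm : 3 ≤ m) (hc0 : 0 < c) : p ∣ m.choose 4 := by
  have hd : p ∣ m.descFactorial 4 := by
    have hcases : c = m ∨ c = m - 1 ∨ c = m - 2 ∨ c = m - 3 := by omega
    have : m.descFactorial 4 = (m-3) * ((m-2) * ((m-1) * (m * 1))) := rfl
    rw [this]
    rcases hcases with h | h | h | h <;> subst h <;>
      first
      | exact Dvd.dvd.mul_right hc _
      | exact Dvd.dvd.mul_left (Dvd.dvd.mul_right hc _) _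
      | exact Dvd.dvd.mul_left (Dvd.dvd.mul_left (Dvd.dvd.mul_right hc _) _) _
      | exact Dvd.dvd.mul_left (Dvd.dvd.mul_left (Dvd.dvd.mul_left (Dvd.dvd.mul_right hc _) _) _) _
  rw [Nat.descFactorial_eq_factorial_mul_choose] at hd
  have h24 : ¬ p ∣ Nat.factorial 4 := by
    intro h
    have hle : p ≤ 24 := by
      have := Nat.le_of_dvd (by norm_num [Nat.factorial]) h
      simpa [Nat.factorial] using this
    have h' : p ∣ 24 := by simpa [Nat.factorial] using h
    interval_cases p <;> revert h' hp <;> norm_num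
  exact (Nat.Coprime.dvd_of_dvd_mul_left (hp.coprime_iff_not_dvd.mpr h24) hd)

theorem stmt13 (p : ℕ) (hp : p.Prime) (hp5 : 5 < p) (a : ℕ) (ha1 : 1 ≤ a) (ha4 : a ≤ 4) :
    p ∣ ((Fintype.piFinset fun _ : Fin 5 => Finset.range p).filter
        (fun x => ∑ i, x i = 2 * p - a)).card := by
  set n := 2 * p - a with hn
  set T := Finset.Nat.antidiagonalTuple 5 n with hT
  set T' := Finset.Nat.antidiagonalTuple 5 (n - p) with hT'
  set G := ((Fintype.piFinset fun _ : Fin 5 => Finset.range p).filter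
        (fun x => ∑ i, x i = n)) with hG
  -- G as a filter of T
  have hGT : G = T.filter (fun x => ∀ i, x i < p) := by
    ext x
    simp only [hG, hT, Finset.mem_filter, Fintype.mem_piFinset, Finset.mem_range,
      Finset.Nat.mem_antidiagonalTuple]
    tauto
  -- the bad part
  have hbad : T.filter (fun x => ¬ ∀ i, x i < p)
      = Finset.univ.biUnion (fun i : Fin 5 => T.filter (fun x => p ≤ x i)) := by
    ext x
    simp only [Finset.mem_filter, Finset.mem_biUnion, Finset.mem_univ, true_and, not_forall,
      not_lt]
    tauto
  have hnlt : n < 2 * p := by omega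
  have hdisj : ∀ i ∈ (Finset.univ : Finset (Fin 5)), ∀ j ∈ Finset.univ, i ≠ j →
      Disjoint (T.filter (fun x => p ≤ x i)) (T.filter (fun x => p ≤ x j)) := by
    intro i _ j _ hij
    rw [Finset.disjoint_left]
    intro x hxi hxj
    simp only [Finset.mem_filter, hT, Finset.Nat.mem_antidiagonalTuple] at hxi hxj
    have hsum : x i + x j ≤ ∑ k, x k := by
      have h := Finset.sum_le_sum_of_subset (f := x) (Finset.subset_univ ({i, j} : Finset (Fin 5)))
      rwa [Finset.sum_pair hij] at h
    omega
  -- each bad set has card T'.card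
  have hcard_bad : ∀ i : Fin 5, (T.filter (fun x => p ≤ x i)).card = T'.card := by
    intro i
    refine Finset.card_bij' (fun x _ => Function.update x i (x i - p))
      (fun y _ => Function.update y i (y i + p)) ?_ ?_ ?_ ?_
    · intro x hx
      simp only [Finset.mem_filter, hT, Finset.Nat.mem_antidiagonalTuple] at hx
      obtain ⟨hx1, hx2⟩ := hx
      simp only [hT', Finset.Nat.mem_antidiagonalTuple]
      rw [Finset.sum_update_of_mem (Finset.mem_univ i)]
      have hsplit : x i + ∑ j ∈ Finset.univ.erase i, x j = ∑ j, x j :=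
        Finset.add_sum_erase _ _ (Finset.mem_univ i)
      rw [← Finset.erase_eq]
      omega
    · intro y hy
      simp only [hT', Finset.Nat.mem_antidiagonalTuple] at hy
      simp only [Finset.mem_filter, hT, Finset.Nat.mem_antidiagonalTuple,
        Function.update_self]
      have hsplit : y i + ∑ j ∈ Finset.univ.erase i, y j = ∑ j, y j :=
        Finset.add_sum_erase _ _ (Finset.mem_univ i)
      constructor
      · rw [Finset.sum_update_of_mem (Finset.mem_univ i)]
        rw [← Finset.erase_eq]
        omega
      · omega
    · intro x hx
      simp only [Finset.mem_filter] at hx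
      obtain ⟨hx1, hx2⟩ := hx
      funext j
      by_cases h : j = i
      · subst h
        simp only [Function.update_self]
        omega
      · simp [Function.update_of_ne h]
    · intro y _
      funext j
      by_cases h : j = i
      · subst h
        simp only [Function.update_self]
        omega
      · simp [Function.update_of_ne h]
  -- total count
  have hsplit : G.card + 5 * T'.card = T.card := by
    rw [hGT]
    have h1 := Finset.card_filter_add_card_filter_not
      (s := T) (p := fun x => ∀ i, x i < p)
    rw [hbad] at h1
    rw [Finset.card_biUnion hdisj] at h1
    simp only [hcard_bad, Finset.sum_const, Finset.card_univ, Fintype.card_fin,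
      smul_eq_mul] at h1
    exact h1
  have hTcard : T.card = (n + 4).choose 4 := by
    rw [hT, card_tuple]
    have : (n + 4).choose ((n + 4) - 4) = (n + 4).choose 4 :=
      Nat.choose_symm (by omega)
    simpa using this
  have hT'card : T'.card = (n - p + 4).choose 4 := by
    rw [hT', card_tuple]
    have : (n - p + 4).choose ((n - p + 4) - 4) = (n - p + 4).choose 4 :=
      Nat.choose_symm (by omega)
    simpa using this
  have hdvdT : p ∣ T.card := by
    rw [hTcard]
    exact dvd_choose4 p (n + 4) (2 * p) hp hp5 ⟨2, by ring⟩ (by omega) (by omega)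
      (by omega) (by omega)
  have hdvdT' : p ∣ T'.card := by
    rw [hT'card]
    exact dvd_choose4 p (n - p + 4) p hp hp5 dvd_rfl (by omega) (by omega)
      (by omega) (by omega)
  have : p ∣ G.card := by
    have h5 : p ∣ 5 * T'.card := hdvdT'.mul_left 5
    have := Nat.dvd_sub hdvdT h5
    have heq : G.card = T.card - 5 * T'.card := by omega
    rwa [heq]
  exact this
end
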